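/- arXiv:0901.4888 — 2 statements merged into one kernel-verified Lean document; each statement's English description precedes it below -/
import Mathlib

section
/- Let L be a bounded distributive lattice, n ≥ 1, and let f : Lⁿ → L be an order-preserving function. Then f is a lattice polynomial function if and only if: for every function g obtained from f by substituting constants for variables, the diagonal δ_g preserves ∨, and δ_f preserves ∨, and f satisfies condition (H) and condition (V). -/
open Classical

variable {L : Type*}

section Defs

variable [DistribLattice L] [BoundedOrder L]

/-- The ternary median term. -/
def med (x y z : L) : L := (x ⊔ y) ⊓ (x ⊔ z) ⊓ (y ⊔ z)

/-- Lattice polynomial functions of arity `n`: the smallest class of functions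
`(Fin n → L) → L` containing projections and constants and closed under
pointwise binary meets and joins. -/
inductive IsLatticePolynomial {n : ℕ} : ((Fin n → L) → L) → Prop
  | proj (k : Fin n) : IsLatticePolynomial fun x => x k
  | const (c : L) : IsLatticePolynomial fun _ => c
  | inf {f g : (Fin n → L) → L} :
      IsLatticePolynomial f → IsLatticePolynomial g →
      IsLatticePolynomial fun x => f x ⊓ g x
  | sup {f g : (Fin n → L) → L} :
      IsLatticePolynomial f → IsLatticePolynomial g →
      IsLatticePolynomial fun x => f x ⊔ g x

/-- Unary lattice polynomial functions: the smallest class of functions `L → L`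
containing the identity and constants and closed under pointwise binary meets
and joins. -/
inductive IsUnaryLatticePolynomial : (L → L) → Prop
  | id : IsUnaryLatticePolynomial fun x : L => x
  | const (c : L) : IsUnaryLatticePolynomial fun _ => c
  | inf {f g : L → L} :
      IsUnaryLatticePolynomial f → IsUnaryLatticePolynomial g →
      IsUnaryLatticePolynomial fun x => f x ⊓ g x
  | sup {f g : L → L} :
      IsUnaryLatticePolynomial f → IsUnaryLatticePolynomial g →
      IsUnaryLatticePolynomial fun x => f x ⊔ g x

/-- `h : L → L` preserves binary meets. -/
def PreservesInf (h : L → L) : Prop := ∀ x y : L, h (x ⊓ y) = h x ⊓ h y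

/-- `h : L → L` preserves binary joins. -/
def PreservesSup (h : L → L) : Prop := ∀ x y : L, h (x ⊔ y) = h x ⊔ h y

/-- Condition (H): `f(x ∧ c̄) = f(x) ∧ c` for all `c ∈ [f(0̄), f(1̄)]`. -/
def CondH {n : ℕ} (f : (Fin n → L) → L) : Prop :=
  ∀ (x : Fin n → L) (c : L), f (fun _ => ⊥) ≤ c → c ≤ f (fun _ => ⊤) →
    (f fun i => x i ⊓ c) = f x ⊓ c

/-- Condition (H*), the dual of (H): `f(x ∨ c̄) = f(x) ∨ c` for all `c ∈ [f(0̄), f(1̄)]`. -/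
def CondHDual {n : ℕ} (f : (Fin n → L) → L) : Prop :=
  ∀ (x : Fin n → L) (c : L), f (fun _ => ⊥) ≤ c → c ≤ f (fun _ => ⊤) →
    (f fun i => x i ⊔ c) = f x ⊔ c

/-- Condition (V): `f(x) = f(x ∧ c̄) ∨ f([x]_c)` for all `c ∈ [f(0̄), f(1̄)]`,
where the `i`-th component of `[x]_c` is `0` if `x i ≤ c`, and `x i` otherwise. -/
def CondV {n : ℕ} (f : (Fin n → L) → L) : Prop :=
  ∀ (x : Fin n → L) (c : L), f (fun _ => ⊥) ≤ c → c ≤ f (fun _ => ⊤) →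
    f x = (f fun i => x i ⊓ c) ⊔ (f fun i => if x i ≤ c then ⊥ else x i)

/-- Condition (V*), the dual of (V): `f(x) = f(x ∨ c̄) ∧ f([x]^c)` for all
`c ∈ [f(0̄), f(1̄)]`, where the `i`-th component of `[x]^c` is `1` if `c ≤ x i`,
and `x i` otherwise. -/
def CondVDual {n : ℕ} (f : (Fin n → L) → L) : Prop :=
  ∀ (x : Fin n → L) (c : L), f (fun _ => ⊥) ≤ c → c ≤ f (fun _ => ⊤) →
    f x = (f fun i => x i ⊔ c) ⊓ (f fun i => if c ≤ x i then ⊤ else x i)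

/-- Condition (I): `f(c̄) = c` for all `c ∈ [f(0̄), f(1̄)]`. -/
def CondI {n : ℕ} (f : (Fin n → L) → L) : Prop :=
  ∀ c : L, f (fun _ => ⊥) ≤ c → c ≤ f (fun _ => ⊤) → f (fun _ => c) = c

/-- A subset `S` of `L` is convex if `a ≤ b ≤ c` with `a, c ∈ S` implies `b ∈ S`. -/
def IsConvexSubset (S : Set L) : Prop :=
  ∀ ⦃a b c : L⦄, a ∈ S → c ∈ S → a ≤ b → b ≤ c → b ∈ S

/-- For every function `g = f_K^a` obtained from `f` by substituting constants for
variables (including `K = ∅`, i.e. `g = f`), the diagonal `δ_g` preserves binary meets.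
Here `δ_{f_K^a}(x) = f(y)` where `y i = a i` for `i ∈ K` and `y i = x` otherwise. -/
def DiagSubstPreservesInf {n : ℕ} (f : (Fin n → L) → L) : Prop :=
  ∀ (K : Set (Fin n)) (a : Fin n → L) (x y : L),
    (f fun i => if i ∈ K then a i else x ⊓ y) =
      (f fun i => if i ∈ K then a i else x) ⊓ (f fun i => if i ∈ K then a i else y)

/-- For every function `g = f_K^a` obtained from `f` by substituting constants for
variables (including `K = ∅`, i.e. `g = f`), the diagonal `δ_g` preserves binary joins. -/
def DiagSubstPreservesSup {n : ℕ} (f : (Fin n → L) → L) : Prop :=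
  ∀ (K : Set (Fin n)) (a : Fin n → L) (x y : L),
    (f fun i => if i ∈ K then a i else x ⊔ y) =
      (f fun i => if i ∈ K then a i else x) ⊔ (f fun i => if i ∈ K then a i else y)

end Defs

/-!
A lattice polynomial function `f` equals its disjunctive normal form
`x ↦ ⋁_S f(e_S) ∧ ⋀_{i ∈ S} x_i`, and every `f_K^a` has diagonal `t ↦ p ∨ (t ∧ q)`; (H), (V)
and the ∨-preservation of the diagonals are read off from these two shapes.

Conversely it suffices to show that `f` equals its normal form `P`. For `c = (⋀_S x ∧ f(1̄)) ∨ f(0̄)`,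
(H) gives `f(e_S) ∧ c = f(e_S ∧ c̄)`, and the diagonal of `f` with `0` substituted off `S` splits
this join into two values below `f(x)`; hence `f(e_S) ∧ ⋀_S x ≤ f(x)`. For the other inequality
assume `x ≤ f(1̄)` (by (H) with `c = f(1̄)`). For `j` in the support of `x`, (V) at
`c = x_j ∨ f(0̄)` and (H) give `f(x) ≤ x_j ∨ f(0̄) ∨ f([x]_c)`, and `[x]_c` has smaller support,
so by induction `f(x) ≤ x_j ∨ P(x)`. Taking the meet over the support `T`, `f(x)` lies below
`(f(x) ∧ ⋀_T x) ∨ P(x) = P(x)`.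
-/

open Finset

lemma IsLatticePolynomial.monotone [DistribLattice L] {n : ℕ} {f : (Fin n → L) → L}
    (h : IsLatticePolynomial f) : Monotone f := by
  induction h with
  | proj k => exact fun x y hxy => hxy k
  | const c => exact monotone_const
  | inf _ _ ihf ihg => exact ihf.inf ihg
  | sup _ _ ihf ihg => exact ihf.sup ihg

/-- `δ_{f_K^a}(t) = f (substDiag K a t)`. Defined for a variable `K`, so that `i ∈ K` is decided
classically, as in `DiagSubstPreservesSup`. -/
noncomputable def substDiag {n : ℕ} (K : Set (Fin n)) (a : Fin n → L) (t : L) : Fin n → L :=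
  fun i => if i ∈ K then a i else t

lemma IsLatticePolynomial.isUnaryLatticePolynomial_subst [DistribLattice L] {n : ℕ}
    {f : (Fin n → L) → L} (h : IsLatticePolynomial f) (K : Set (Fin n)) (a : Fin n → L) :
    IsUnaryLatticePolynomial fun t => f (substDiag K a t) := by
  induction h with
  | proj k =>
    by_cases hk : k ∈ K
    · simpa [substDiag, hk] using .const (a k)
    · simpa [substDiag, hk] using .id
  | const c => exact .const c
  | inf _ _ ihf ihg => exact .inf ihf ihg
  | sup _ _ ihf ihg => exact .sup ihf ihg

section NormalForm

variable [DistribLattice L] [BoundedOrder L] {n : ℕ}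

def charVec (S : Finset (Fin n)) : Fin n → L := fun i => if i ∈ S then ⊤ else ⊥

@[simp]
lemma charVec_empty : (charVec ∅ : Fin n → L) = fun _ => ⊥ := by
  funext i; simp [charVec]

/-- `⋁_S f(e_S) ∧ ⋀_{i ∈ S} x_i`, with `e_S = charVec S`. -/
def dnf (f : (Fin n → L) → L) (x : Fin n → L) : L :=
  univ.sup fun S => f (charVec S) ⊓ S.inf x

lemma inf_le_dnf (f : (Fin n → L) → L) (S : Finset (Fin n)) (x : Fin n → L) :
    f (charVec S) ⊓ S.inf x ≤ dnf f x :=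
  le_sup (f := fun S => f (charVec S) ⊓ S.inf x) (mem_univ S)

lemma apply_bot_le_dnf (f : (Fin n → L) → L) (x : Fin n → L) :
    f (fun _ => ⊥) ≤ dnf f x := by
  simpa using inf_le_dnf f ∅ x

lemma isLatticePolynomial_finset_sup {ι : Type*} (s : Finset ι) {g : ι → (Fin n → L) → L}
    (hg : ∀ i ∈ s, IsLatticePolynomial (g i)) :
    IsLatticePolynomial fun x => s.sup fun i => g i x := by
  induction s using Finset.cons_induction with
  | empty => exact .const ⊥
  | cons a s ha ih =>
    simp only [sup_cons]
    exact .sup (hg a (mem_cons_self a s)) (ih fun i hi => hg i (mem_cons_of_mem hi))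

lemma isLatticePolynomial_finset_inf {ι : Type*} (s : Finset ι) {g : ι → (Fin n → L) → L}
    (hg : ∀ i ∈ s, IsLatticePolynomial (g i)) :
    IsLatticePolynomial fun x => s.inf fun i => g i x := by
  induction s using Finset.cons_induction with
  | empty => exact .const ⊤
  | cons a s ha ih =>
    simp only [inf_cons]
    exact .inf (hg a (mem_cons_self a s)) (ih fun i hi => hg i (mem_cons_of_mem hi))

lemma isLatticePolynomial_dnf (f : (Fin n → L) → L) : IsLatticePolynomial (dnf f) :=
  isLatticePolynomial_finset_sup _ fun S _ =>
    .inf (.const _) (isLatticePolynomial_finset_inf S fun i _ => .proj i)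

lemma monotone_dnf (f : (Fin n → L) → L) : Monotone (dnf f) :=
  (isLatticePolynomial_dnf f).monotone

lemma dnf_proj (k : Fin n) (x : Fin n → L) : dnf (fun y => y k) x = x k := by
  refine le_antisymm (Finset.sup_le fun S _ => ?_) ?_
  · by_cases hk : k ∈ S
    · exact inf_le_right.trans (inf_le hk)
    · simp [charVec, hk]
  · simpa [charVec] using inf_le_dnf (fun y => y k) {k} x

lemma dnf_const (c : L) (x : Fin n → L) : dnf (fun _ => c) x = c :=
  le_antisymm (Finset.sup_le fun _ _ => inf_le_left) (by simpa using inf_le_dnf (fun _ => c) ∅ x)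

lemma dnf_sup (f g : (Fin n → L) → L) (x : Fin n → L) :
    dnf (fun y => f y ⊔ g y) x = dnf f x ⊔ dnf g x := by
  simp only [dnf, inf_sup_right, ← sup_sup]
  rfl

lemma dnf_inf {f g : (Fin n → L) → L} (hf : Monotone f) (hg : Monotone g) (x : Fin n → L) :
    dnf (fun y => f y ⊓ g y) x = dnf f x ⊓ dnf g x := by
  refine le_antisymm (Finset.sup_le fun S _ => ?_) ?_
  · exact le_inf ((inf_le_inf_right _ inf_le_left).trans (inf_le_dnf f S x))
      ((inf_le_inf_right _ inf_le_right).trans (inf_le_dnf g S x))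
  · rw [dnf, dnf, sup_inf_sup]
    refine Finset.sup_le fun ⟨S, T⟩ _ => le_trans ?_ (inf_le_dnf _ (S ∪ T) x)
    have hS : charVec S ≤ (charVec (S ∪ T) : Fin n → L) := fun i => by
      by_cases hi : i ∈ S <;> simp [charVec, hi]
    have hT : charVec T ≤ (charVec (S ∪ T) : Fin n → L) := fun i => by
      by_cases hi : i ∈ T <;> simp [charVec, hi]
    rw [inf_union]
    exact le_inf (inf_le_inf (inf_le_left.trans (hf hS)) (inf_le_left.trans (hg hT)))
      (inf_le_inf inf_le_right inf_le_right)

theorem IsLatticePolynomial.dnf_eq {f : (Fin n → L) → L} (h : IsLatticePolynomial f) :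
    dnf f = f := by
  induction h with
  | proj k => exact funext (dnf_proj k)
  | const c => exact funext (dnf_const c)
  | inf hf hg ihf ihg =>
    funext x
    rw [dnf_inf hf.monotone hg.monotone, ihf, ihg]
  | sup _ _ ihf ihg =>
    funext x
    rw [dnf_sup, ihf, ihg]

lemma IsLatticePolynomial.inf_le_apply {f : (Fin n → L) → L} (h : IsLatticePolynomial f)
    (S : Finset (Fin n)) (x : Fin n → L) : f (charVec S) ⊓ S.inf x ≤ f x :=
  (inf_le_dnf f S x).trans_eq (congrFun h.dnf_eq x)

end NormalForm

section Forward

variable [DistribLattice L] [BoundedOrder L] {n : ℕ}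

lemma IsUnaryLatticePolynomial.exists_eq_sup_inf {h : L → L} (hh : IsUnaryLatticePolynomial h) :
    ∃ p q : L, p ≤ q ∧ ∀ t, h t = p ⊔ t ⊓ q := by
  induction hh with
  | id => exact ⟨⊥, ⊤, bot_le, fun t => by simp⟩
  | const c => exact ⟨c, c, le_rfl, fun t => by simp⟩
  | inf _ _ ihf ihg =>
    obtain ⟨p₁, q₁, hpq₁, e₁⟩ := ihf
    obtain ⟨p₂, q₂, hpq₂, e₂⟩ := ihg
    refine ⟨p₁ ⊓ p₂, q₁ ⊓ q₂, inf_le_inf hpq₁ hpq₂, fun t => ?_⟩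
    -- for `p ≤ q`, `p ⊔ t ⊓ q = (p ⊔ t) ⊓ q`
    simp only [e₁, e₂]
    rw [← sup_inf_assoc_of_le _ hpq₁, ← sup_inf_assoc_of_le _ hpq₂,
      ← sup_inf_assoc_of_le _ (inf_le_inf hpq₁ hpq₂), inf_inf_inf_comm, ← sup_inf_right]
  | sup _ _ ihf ihg =>
    obtain ⟨p₁, q₁, hpq₁, e₁⟩ := ihf
    obtain ⟨p₂, q₂, hpq₂, e₂⟩ := ihg
    refine ⟨p₁ ⊔ p₂, q₁ ⊔ q₂, sup_le_sup hpq₁ hpq₂, fun t => ?_⟩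
    simp only [e₁, e₂]
    rw [inf_sup_left, sup_sup_sup_comm]

lemma IsUnaryLatticePolynomial.preservesSup {h : L → L} (hh : IsUnaryLatticePolynomial h) :
    PreservesSup h := by
  obtain ⟨p, q, -, e⟩ := hh.exists_eq_sup_inf
  intro x y
  rw [e, e, e, inf_sup_right, sup_sup_distrib_left]

lemma IsLatticePolynomial.diagSubstPreservesSup {f : (Fin n → L) → L}
    (h : IsLatticePolynomial f) : DiagSubstPreservesSup f := fun K a =>
  (h.isUnaryLatticePolynomial_subst K a).preservesSup

lemma IsLatticePolynomial.condH {f : (Fin n → L) → L} (h : IsLatticePolynomial f) :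
    CondH f := by
  intro x c hc₀ _
  rw [← congrFun h.dnf_eq (fun i => x i ⊓ c), ← congrFun h.dnf_eq x, dnf, dnf,
    sup_inf_distrib_right]
  refine Finset.sup_congr rfl fun S _ => ?_
  change f (charVec S) ⊓ S.inf (x ⊓ fun _ => c) = _
  rcases S.eq_empty_or_nonempty with rfl | hS
  · simpa using hc₀
  · rw [inf_inf, inf_const hS, inf_assoc]

lemma IsLatticePolynomial.condV {f : (Fin n → L) → L} (h : IsLatticePolynomial f) :
    CondV f := by
  intro x c hc₀ hc₁
  refine le_antisymm ?_ (sup_le (h.monotone fun i => inf_le_left) (h.monotone fun i => ?_))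
  · conv_lhs => rw [← h.dnf_eq]
    refine Finset.sup_le fun S _ => ?_
    by_cases hS : ∃ i ∈ S, x i ≤ c
    · obtain ⟨i, hiS, hi⟩ := hS
      rw [h.condH x c hc₀ hc₁]
      exact le_sup_of_le_left (le_inf (h.inf_le_apply S x)
        (inf_le_right.trans ((inf_le hiS).trans hi)))
    · simp only [not_exists, not_and] at hS
      refine le_sup_of_le_right (le_of_eq_of_le ?_ (h.inf_le_apply S _))
      exact congrArg _ (inf_congr rfl fun i hi => (if_neg (hS i hi)).symm)
  · split_ifs
    exacts [bot_le, le_rfl]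

end Forward

section Backward

variable [DistribLattice L] [BoundedOrder L] {n : ℕ} {f : (Fin n → L) → L}

lemma dnf_le_of_diagSubstPreservesSup_of_condH (hf : Monotone f)
    (hsup : DiagSubstPreservesSup f) (hH : CondH f) (x : Fin n → L) : dnf f x ≤ f x := by
  refine Finset.sup_le fun S _ => ?_
  set c₀ := f fun _ => ⊥
  set c₁ := f fun _ => ⊤
  have hc : c₀ ≤ c₁ := hf fun _ => bot_le
  set g : L → L := fun t => f (substDiag (↑S)ᶜ ⊥ t)
  have hg : ∀ t, c₀ ≤ t → t ≤ c₁ → g t = f (charVec S) ⊓ t := fun t h₀ h₁ => by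
    rw [← hH _ t h₀ h₁]
    refine congrArg f (funext fun i => ?_)
    by_cases hi : i ∈ S <;> simp [substDiag, charVec, hi]
  set m := S.inf x
  have hgm : g (m ⊓ c₁) ≤ f x := hf fun i => by
    by_cases hi : i ∈ S
    · simpa [substDiag, hi] using inf_le_left.trans (inf_le hi)
    · simp [substDiag, hi]
  calc f (charVec S) ⊓ m
      ≤ f (charVec S) ⊓ (m ⊓ c₁ ⊔ c₀) :=
        le_inf inf_le_left (le_sup_of_le_left (le_inf inf_le_right
          (inf_le_left.trans (hf fun _ => le_top))))
    _ = g (m ⊓ c₁ ⊔ c₀) := (hg _ le_sup_right (sup_le inf_le_right hc)).symm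
    _ = g (m ⊓ c₁) ⊔ g c₀ := hsup (↑S)ᶜ (fun _ => ⊥) (m ⊓ c₁) c₀
    _ ≤ f x := sup_le hgm (by rw [hg c₀ le_rfl hc]; exact inf_le_right.trans (hf fun _ => bot_le))

lemma le_dnf_of_forall_mem_le_sup_dnf (hf : Monotone f) {T : Finset (Fin n)} {y : Fin n → L}
    (hyT : ∀ i ∉ T, y i = ⊥) (h : ∀ j ∈ T, f y ≤ y j ⊔ dnf f y) : f y ≤ dnf f y := by
  have hT : f y ⊓ T.inf y ≤ dnf f y := by
    refine (inf_le_inf_right _ (hf fun i => ?_)).trans (inf_le_dnf f T y)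
    by_cases hi : i ∈ T <;> simp [charVec, hi, hyT]
  calc f y ≤ f y ⊓ (T.inf y ⊔ dnf f y) := by
        rw [inf_sup_distrib_right]
        exact le_inf le_rfl (Finset.le_inf h)
    _ = f y ⊓ T.inf y ⊔ f y ⊓ dnf f y := inf_sup_left _ _ _
    _ ≤ dnf f y := sup_le hT inf_le_right

lemma le_dnf_of_condH_of_condV (hf : Monotone f) (hH : CondH f) (hV : CondV f)
    (x : Fin n → L) : f x ≤ dnf f x := by
  set c₀ := f fun _ => ⊥
  set c₁ := f fun _ => ⊤
  have hc : c₀ ≤ c₁ := hf fun _ => bot_le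
  suffices ∀ T : Finset (Fin n), ∀ v, (∀ i ∉ T, v i = ⊥) → f v ≤ dnf f v from
    this univ x (by simp)
  intro T
  induction T using Finset.strongInduction with
  | H T ih =>
    intro v hvT
    set y := fun i => v i ⊓ c₁
    have hy : f y = f v := by rw [hH v c₁ hc le_rfl, inf_eq_left.2 (hf fun _ => le_top)]
    have hyT : ∀ i ∉ T, y i = ⊥ := fun i hi => by simp [y, hvT i hi]
    suffices f y ≤ dnf f y from hy ▸ this.trans (monotone_dnf f fun i => inf_le_left)
    refine le_dnf_of_forall_mem_le_sup_dnf hf hyT fun j hj => ?_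
    set c := y j ⊔ c₀
    have hc₁ : c ≤ c₁ := sup_le inf_le_right hc
    set z := fun i => if y i ≤ c then ⊥ else y i
    have hz : f z ≤ dnf f y := by
      refine (ih (T.erase j) (erase_ssubset hj) z fun i hi => ?_).trans
        (monotone_dnf f fun i => ?_)
      · rcases eq_or_ne i j with rfl | hij
        · simp [z, c]
        · simp [z, hyT i fun hiT => hi (mem_erase.2 ⟨hij, hiT⟩)]
      · dsimp only [z]
        split_ifs
        exacts [bot_le, le_rfl]
    calc f y = f (fun i => y i ⊓ c) ⊔ f z := hV y c le_sup_right hc₁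
      _ = f y ⊓ y j ⊔ f y ⊓ c₀ ⊔ f z := by rw [hH y c le_sup_right hc₁, inf_sup_left]
      _ ≤ y j ⊔ dnf f y :=
        sup_le (sup_le (le_sup_of_le_left inf_le_right)
          (le_sup_of_le_right (inf_le_right.trans (apply_bot_le_dnf f y))))
          (le_sup_of_le_right hz)

end Backward

theorem isLatticePolynomial_iff_diagSup_condH_condV_general
    {L : Type*} [DistribLattice L] [BoundedOrder L] {n : ℕ}
    (f : (Fin n → L) → L) (hf : Monotone f) :
    IsLatticePolynomial f ↔ DiagSubstPreservesSup f ∧ CondH f ∧ CondV f := by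
  refine ⟨fun h => ⟨h.diagSubstPreservesSup, h.condH, h.condV⟩, fun ⟨hsup, hH, hV⟩ => ?_⟩
  have hdnf : dnf f = f := funext fun x =>
    le_antisymm (dnf_le_of_diagSubstPreservesSup_of_condH hf hsup hH x)
      (le_dnf_of_condH_of_condV hf hH hV x)
  exact hdnf ▸ isLatticePolynomial_dnf f

/-- An order-preserving function `f : Lⁿ → L` (`n ≥ 1`) is a lattice
polynomial function iff for every function `g` obtained from `f` by substituting
constants for variables (including `f` itself), `δ_g` preserves `∨`, and `f`
satisfies conditions (H) and (V). -/
theorem isLatticePolynomial_iff_diagSup_condH_condV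
    {L : Type*} [DistribLattice L] [BoundedOrder L] {n : ℕ} (hn : 1 ≤ n)
    (f : (Fin n → L) → L) (hf : Monotone f) :
    IsLatticePolynomial f ↔ DiagSubstPreservesSup f ∧ CondH f ∧ CondV f :=
  isLatticePolynomial_iff_diagSup_condH_condV_general f hf
end

section
/- Let L be a bounded distributive lattice. Every lattice polynomial function f : Lⁿ → L satisfies condition (H) and its dual condition (H*). -/
open Classical

variable {L : Type*}

/-! Induction on `f` gives the identity `f(x ∧ c̄) = (f(x) ∧ c) ∨ f(0̄)` for every `c`, the
meet step being a distributivity computation that uses `g(0̄) ≤ g(x)` for the two operands.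
When `f(0̄) ≤ c` the last joinand is absorbed, as `f(0̄) ≤ f(x)`. Condition (H*) is the same
identity read in the order dual. -/

section LatticePolynomial

variable [DistribLattice L]

theorem inf_sup_inf_inf_sup_of_le {a b a₀ b₀ : L} (c : L) (ha : a₀ ≤ a) (hb : b₀ ≤ b) :
    (a ⊓ c ⊔ a₀) ⊓ (b ⊓ c ⊔ b₀) = a ⊓ b ⊓ c ⊔ a₀ ⊓ b₀ :=
  calc (a ⊓ c ⊔ a₀) ⊓ (b ⊓ c ⊔ b₀) = a ⊓ (c ⊔ a₀) ⊓ (b ⊓ (c ⊔ b₀)) := by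
        rw [inf_sup_assoc_of_le c ha, inf_sup_assoc_of_le c hb]
    _ = a ⊓ b ⊓ ((c ⊔ a₀) ⊓ (c ⊔ b₀)) := by ac_rfl
    _ = a ⊓ b ⊓ c ⊔ a₀ ⊓ b₀ := by
        rw [← sup_inf_left, inf_sup_assoc_of_le c (inf_le_inf ha hb)]

variable {n : ℕ} {f : (Fin n → L) → L}

theorem IsLatticePolynomial.monotone_s9 (hf : IsLatticePolynomial f) : Monotone f := by
  induction hf with
  | proj k => exact fun _ _ h => h k
  | const c => exact monotone_const
  | inf _ _ ihf ihg => exact ihf.inf ihg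
  | sup _ _ ihf ihg => exact ihf.sup ihg

theorem IsLatticePolynomial.dual (hf : IsLatticePolynomial f) :
    IsLatticePolynomial (L := Lᵒᵈ) f := by
  induction hf with
  | proj k => exact .proj k
  | const c => exact .const (OrderDual.toDual c)
  | inf _ _ ihf ihg => exact .sup ihf ihg
  | sup _ _ ihf ihg => exact .inf ihf ihg

theorem IsLatticePolynomial.map_inf_const [OrderBot L] (hf : IsLatticePolynomial f)
    (x : Fin n → L) (c : L) :
    (f fun i => x i ⊓ c) = f x ⊓ c ⊔ f fun _ => ⊥ := by
  induction hf with
  | proj k => simp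
  | const d => simp
  | @inf g h hg hh ihg ihh =>
    dsimp only
    rw [ihg, ihh]
    exact inf_sup_inf_inf_sup_of_le c (hg.monotone_s9 bot_le) (hh.monotone_s9 bot_le)
  | sup _ _ ihg ihh =>
    dsimp only
    rw [ihg, ihh, sup_sup_sup_comm, ← inf_sup_right]

theorem IsLatticePolynomial.map_sup_const [OrderTop L] (hf : IsLatticePolynomial f)
    (x : Fin n → L) (c : L) :
    (f fun i => x i ⊔ c) = (f x ⊔ c) ⊓ f fun _ => ⊤ :=
  hf.dual.map_inf_const (L := Lᵒᵈ) x c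

end LatticePolynomial

/-- Every lattice polynomial function satisfies condition (H) and its
dual (H*). -/
theorem polynomial_condH_condHDual
    {L : Type*} [DistribLattice L] [BoundedOrder L] {n : ℕ}
    (f : (Fin n → L) → L) (hf : IsLatticePolynomial f) :
    CondH f ∧ CondHDual f := by
  constructor
  · intro x c hc _
    rw [hf.map_inf_const, sup_eq_left]
    exact le_inf (hf.monotone_s9 bot_le) hc
  · intro x c _ hc
    rw [hf.map_sup_const, inf_eq_left]
    exact sup_le (hf.monotone_s9 le_top) hc
end
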